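/- arXiv:2112.14164 — 2 statements merged into one kernel-verified Lean document; each statement's English description precedes it below -/
import Mathlib

section
/- For any complex number s with Re(s) > 1 and any τ in the upper half-plane, ∑_{n∈ℤ} (τ+n)^{-s} = (e^{-πis/2}(2π)^s / Γ(s)) ∑_{n≥1} n^{s-1} e^{2πinτ} (Lipschitz's formula, with the principal branch of the power). -/
/-!
Poisson summation applied to `f x = (τ + x)^(-s)`. The function `g t = t^(s-1) e^{2πiτt}`
(for `t > 0`, zero otherwise) has Fourier transform `Γ(s) (2πi(x - τ))^(-s)`: this is the
Gamma integral with the complex rate `2πi(x - τ)`, obtained from the real-rate case by analytic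
continuation in the rate. Untangling the branch of the power, `𝓕 g` is a multiple of `f ∘ neg`,
so Fourier inversion gives `𝓕 f = e^{-πis/2} (2π)^s / Γ(s) · g`, and `∑ₙ g n` is the sum over
positive integers on the right-hand side.
-/

open Complex Filter Real
open Set MeasureTheory Asymptotics Metric
open scoped FourierTransform Topology

section GammaIntegral

variable {a : ℂ}

lemma norm_ofReal_cpow_mul_cexp_neg_mul (a c : ℂ) {t : ℝ} (ht : 0 < t) :
    ‖(t : ℂ) ^ (a - 1) * cexp (-(c * t))‖ = t ^ (a.re - 1) * Real.exp (-(c.re * t)) := by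
  simp [norm_exp, norm_cpow_eq_rpow_re_of_pos ht]

lemma continuousOn_ofReal_cpow_mul_cexp_neg_mul (a c : ℂ) :
    ContinuousOn (fun t : ℝ => (t : ℂ) ^ (a - 1) * cexp (-(c * t))) (Ioi 0) := fun t ht =>
  ((continuousAt_ofReal_cpow_const _ _ (Or.inr (ne_of_gt ht))).mul
    (by fun_prop)).continuousWithinAt

lemma integrableOn_ofReal_cpow_mul_cexp_neg_mul_Ioi (ha : 0 < a.re) {c : ℂ} (hc : 0 < c.re) :
    IntegrableOn (fun t : ℝ => (t : ℂ) ^ (a - 1) * cexp (-(c * t))) (Ioi 0) := by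
  refine (integrableOn_rpow_mul_exp_neg_mul_rpow (s := a.re - 1) (p := 1) (by linarith)
    one_pos hc).mono' ((continuousOn_ofReal_cpow_mul_cexp_neg_mul a c).aestronglyMeasurable
    measurableSet_Ioi) (ae_restrict_of_forall_mem measurableSet_Ioi fun t ht => ?_)
  rw [norm_ofReal_cpow_mul_cexp_neg_mul a c ht, Real.rpow_one, neg_mul]

lemma differentiableOn_integral_ofReal_cpow_mul_cexp_neg_mul (ha : 0 < a.re) :
    DifferentiableOn ℂ (fun c : ℂ => ∫ t : ℝ in Ioi 0, (t : ℂ) ^ (a - 1) * cexp (-(c * t)))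
      {c | 0 < c.re} := by
  intro c₀ (hc₀ : 0 < c₀.re)
  set ε := c₀.re / 2 with hε_def
  have hε : 0 < ε := half_pos hc₀
  have hre : ∀ c ∈ ball c₀ ε, ε ≤ c.re := fun c hc => by
    have := (abs_re_le_norm (c - c₀)).trans (mem_ball_iff_norm.mp hc).le
    rw [sub_re, abs_le] at this
    linarith [this.1, hε_def]
  have hF' : ∀ c t, HasDerivAt (fun c : ℂ => (t : ℂ) ^ (a - 1) * cexp (-(c * t)))
      ((t : ℂ) ^ (a - 1) * cexp (-(c * t)) * -t) c := fun c t => by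
    simpa [mul_assoc] using (((hasDerivAt_id c).mul_const (t : ℂ)).neg.cexp.const_mul _)
  have hbound : ∀ c ∈ ball c₀ ε, ∀ t ∈ Ioi (0 : ℝ),
      ‖(t : ℂ) ^ (a - 1) * cexp (-(c * t)) * -t‖ ≤ t ^ a.re * Real.exp (-ε * t ^ (1 : ℝ)) := by
    intro c hc t (ht : 0 < t)
    rw [norm_mul, norm_ofReal_cpow_mul_cexp_neg_mul a c ht, norm_neg, norm_real,
      Real.norm_of_nonneg ht.le, Real.rpow_one, mul_right_comm, ← Real.rpow_add_one ht.ne',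
      sub_add_cancel]
    gcongr
    nlinarith [hre c hc]
  obtain ⟨-, hderiv⟩ := hasDerivAt_integral_of_dominated_loc_of_deriv_le (ball_mem_nhds c₀ hε)
    (Eventually.of_forall fun c =>
      (continuousOn_ofReal_cpow_mul_cexp_neg_mul a c).aestronglyMeasurable measurableSet_Ioi)
    (integrableOn_ofReal_cpow_mul_cexp_neg_mul_Ioi ha hc₀)
    (((continuousOn_ofReal_cpow_mul_cexp_neg_mul a c₀).mul (by fun_prop)).aestronglyMeasurable
      measurableSet_Ioi)
    (ae_restrict_of_forall_mem measurableSet_Ioi fun t ht c hc => hbound c hc t ht)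
    (integrableOn_rpow_mul_exp_neg_mul_rpow (by linarith) one_pos hε)
    (ae_of_all _ fun t c _ => hF' c t)
  exact hderiv.differentiableAt.differentiableWithinAt

lemma integral_ofReal_cpow_mul_cexp_neg_mul_Ioi (ha : 0 < a.re) {c : ℂ} (hc : 0 < c.re) :
    ∫ t : ℝ in Ioi 0, (t : ℂ) ^ (a - 1) * cexp (-(c * t)) = c ^ (-a) * Gamma a := by
  have hU : IsOpen {c : ℂ | 0 < c.re} := isOpen_lt continuous_const continuous_re
  have hrhs : DifferentiableOn ℂ (fun c : ℂ => c ^ (-a) * Gamma a) {c | 0 < c.re} :=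
    fun c hc => ((differentiableAt_id.cpow_const (.inl hc)).mul_const _).differentiableWithinAt
  have hreal : ∀ r : ℝ, 0 < r →
      ∫ t : ℝ in Ioi 0, (t : ℂ) ^ (a - 1) * cexp (-(r * t)) = (r : ℂ) ^ (-a) * Gamma a := by
    intro r hr
    rw [integral_cpow_mul_exp_neg_mul_Ioi ha hr, one_div,
      inv_cpow _ _ (by simp [arg_ofReal_of_nonneg hr.le, pi_ne_zero.symm]), cpow_neg]
  -- the two sides agree on the positive reals, which accumulate at `1`
  have hofReal : Tendsto ((↑) : ℝ → ℂ) (𝓝[≠] 1) (𝓝[≠] 1) := by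
    simpa using continuous_ofReal.continuousWithinAt.tendsto_nhdsWithin
      (x := (1 : ℝ)) (t := {1}ᶜ) fun x hx => by simpa using hx
  refine ((differentiableOn_integral_ofReal_cpow_mul_cexp_neg_mul ha).analyticOnNhd hU)
    |>.eqOn_of_preconnected_of_frequently_eq (hrhs.analyticOnNhd hU)
      (convex_halfSpace_re_gt 0).isPreconnected (z₀ := 1) (by simp)
      (hofReal.frequently ?_) hc
  exact ((eventually_gt_nhds one_pos).filter_mono nhdsWithin_le_nhds |>.mono hreal).frequently

end GammaIntegral

lemma norm_cpow_le_rpow_mul_exp (z w : ℂ) : ‖z ^ w‖ ≤ ‖z‖ ^ w.re * Real.exp (π * |w.im|) := by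
  refine (norm_cpow_le z w).trans ?_
  rw [div_eq_mul_inv, ← Real.exp_neg]
  gcongr
  calc -(arg z * w.im) ≤ |arg z| * |w.im| := by rw [← abs_mul]; exact neg_le_abs _
    _ ≤ π * |w.im| := by gcongr; exact abs_arg_le_pi z

lemma log_neg_I_mul {w : ℂ} (hw : 0 < w.im) : log (-I * w) = log w - π / 2 * I := by
  have hw₀ : w ≠ 0 := fun h => by simp [h] at hw
  rw [(log_mul_eq_add_log_iff (by simp) hw₀).mpr, log_neg_I]
  · ring
  rw [arg_neg_I]
  constructor <;> linarith [arg_nonneg_iff.mpr hw.le, arg_le_pi w, pi_pos]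

lemma two_pi_I_mul_neg_cpow {w : ℂ} (hw : 0 < w.im) (s : ℂ) :
    (2 * π * I * -w) ^ s = (2 * π) ^ s * cexp (-(π * I * s / 2)) * w ^ s := by
  have hw₀ : w ≠ 0 := fun h => by simp [h] at hw
  have h2π : (0 : ℝ) < 2 * π := by positivity
  have hlog : log (2 * π * I * -w) = Real.log (2 * π) + (log w - π / 2 * I) := by
    rw [show (2 * π * I * -w : ℂ) = ((2 * π : ℝ) : ℂ) * (-I * w) by push_cast; ring,
      log_ofReal_mul h2π (by simp [hw₀]), log_neg_I_mul hw]
  rw [cpow_def_of_ne_zero (by simp [hw₀, pi_ne_zero]), hlog,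
    show (2 * π : ℂ) = ((2 * π : ℝ) : ℂ) by push_cast; rfl,
    cpow_def_of_ne_zero (by exact_mod_cast h2π.ne'), cpow_def_of_ne_zero hw₀,
    ← ofReal_log h2π.le, ← Complex.exp_add, ← Complex.exp_add]
  congr 1
  ring

lemma exists_one_add_abs_le_mul_norm_add {τ : ℂ} (hτ : τ.im ≠ 0) :
    ∃ A > 0, ∀ x : ℝ, 1 + |x| ≤ A * ‖τ + x‖ := by
  have him : 0 < |τ.im| := abs_pos.mpr hτ
  refine ⟨(1 + ‖τ‖) / |τ.im| + 1, by positivity, fun x => ?_⟩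
  have h₁ : |τ.im| ≤ ‖τ + x‖ := by simpa using abs_im_le_norm (τ + x)
  have h₂ : |x| ≤ ‖τ + x‖ + ‖τ‖ := by
    simpa using norm_sub_le (τ + x) τ
  have h₃ : 1 + ‖τ‖ ≤ (1 + ‖τ‖) / |τ.im| * ‖τ + x‖ := by
    rw [div_mul_eq_mul_div, le_div_iff₀ him]
    gcongr
  linarith

lemma exists_norm_add_cpow_neg_le {τ : ℂ} (hτ : τ.im ≠ 0) {s : ℂ} (hs : 0 ≤ s.re) :
    ∃ C ≥ 0, ∀ x : ℝ, ‖(τ + x) ^ (-s)‖ ≤ C * (1 + |x|) ^ (-s.re) := by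
  obtain ⟨A, hA, hle⟩ := exists_one_add_abs_le_mul_norm_add hτ
  refine ⟨Real.exp (π * |s.im|) * A ^ s.re, by positivity, fun x => ?_⟩
  calc ‖(τ + x) ^ (-s)‖ ≤ ‖τ + x‖ ^ (-s.re) * Real.exp (π * |s.im|) := by
        simpa using norm_cpow_le_rpow_mul_exp (τ + x) (-s)
    _ ≤ ((1 + |x|) / A) ^ (-s.re) * Real.exp (π * |s.im|) := by
        gcongr ?_ * _
        exact Real.rpow_le_rpow_of_nonpos (by positivity) ((div_le_iff₀' hA).mpr (hle x))
          (by linarith)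
    _ = Real.exp (π * |s.im|) * A ^ s.re * (1 + |x|) ^ (-s.re) := by
        rw [Real.div_rpow (by positivity) hA.le, Real.rpow_neg hA.le, div_inv_eq_mul]
        ring

lemma fourier_const_smul {V E : Type*} [NormedAddCommGroup V] [InnerProductSpace ℝ V]
    [MeasurableSpace V] [BorelSpace V] [FiniteDimensional ℝ V] [NormedAddCommGroup E]
    [NormedSpace ℂ E] (c : ℂ) (f : V → E) : 𝓕 (c • f) = c • 𝓕 f :=
  VectorFourier.fourierIntegral_const_smul _ _ _ _ _

section ShiftedPower

variable {τ : ℂ}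

lemma continuous_add_ofReal_cpow (hτ : τ.im ≠ 0) (s : ℂ) :
    Continuous fun x : ℝ => (τ + x) ^ s :=
  continuous_iff_continuousAt.mpr fun _ =>
    (continuousAt_cpow_const (mem_slitPlane_iff.mpr (.inr (by simpa using hτ)))).comp
      (by fun_prop)

lemma integrable_add_ofReal_cpow_neg (hτ : τ.im ≠ 0) {s : ℂ} (hs : 1 < s.re) :
    Integrable fun x : ℝ => (τ + x) ^ (-s) := by
  obtain ⟨C, -, hC⟩ := exists_norm_add_cpow_neg_le hτ (by linarith : 0 ≤ s.re)
  exact ((integrable_one_add_norm (by simpa using hs)).const_mul C).mono'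
    (continuous_add_ofReal_cpow hτ _).aestronglyMeasurable
    (ae_of_all _ fun x => by simpa using hC x)

lemma isBigO_add_ofReal_cpow_neg (hτ : τ.im ≠ 0) {s : ℂ} (hs : 0 ≤ s.re) :
    (fun x : ℝ => (τ + x) ^ (-s)) =O[cocompact ℝ] (|·| ^ (-s.re)) := by
  obtain ⟨C, hC₀, hC⟩ := exists_norm_add_cpow_neg_le hτ hs
  refine IsBigO.of_bound C ?_
  filter_upwards [(isCompact_singleton (x := (0 : ℝ))).compl_mem_cocompact] with x (hx : x ≠ 0)
  rw [Real.norm_of_nonneg (by positivity)]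
  refine (hC x).trans (mul_le_mul_of_nonneg_left ?_ hC₀)
  exact Real.rpow_le_rpow_of_nonpos (abs_pos.mpr hx) (by linarith) (by linarith)

noncomputable def lipschitzKernel (s τ : ℂ) : ℝ → ℂ :=
  (Ioi 0).indicator fun t => (t : ℂ) ^ (s - 1) * cexp (2 * π * I * t * τ)

variable {s : ℂ}

lemma continuous_lipschitzKernel (hs : 1 < s.re) : Continuous (lipschitzKernel s τ) := by
  refine continuous_indicator (fun t ht => ?_) ((continuous_ofReal_cpow_const ?_).mul
    (by fun_prop)).continuousOn
  · have hs₁ : s - 1 ≠ 0 := ne_of_apply_ne re (by simp only [sub_re, one_re, zero_re]; linarith)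
    rw [frontier_Ioi, mem_singleton_iff] at ht
    simp [ht, zero_cpow hs₁]
  · simpa using hs

lemma integrable_lipschitzKernel (hs : 0 < s.re) (hτ : 0 < τ.im) :
    Integrable (lipschitzKernel s τ) := by
  refine (integrable_indicator_iff measurableSet_Ioi).mpr
    ((integrableOn_ofReal_cpow_mul_cexp_neg_mul_Ioi hs (c := -(2 * π * I * τ)) ?_).congr_fun
      (fun t _ => by ring_nf) measurableSet_Ioi)
  simpa using mul_pos two_pi_pos hτ

lemma fourier_lipschitzKernel (hs : 0 < s.re) (hτ : 0 < τ.im) (x : ℝ) :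
    𝓕 (lipschitzKernel s τ) x =
      Gamma s / (cexp (-π * I * s / 2) * (2 * π) ^ s) * (τ - x) ^ (-s) := by
  have hc : 0 < (2 * π * I * (x - τ)).re := by simpa using mul_pos two_pi_pos hτ
  calc 𝓕 (lipschitzKernel s τ) x
      = ∫ t : ℝ in Ioi 0, (t : ℂ) ^ (s - 1) * cexp (-(2 * π * I * (x - τ) * t)) := by
        rw [Real.fourier_real_eq_integral_exp_smul, ← integral_indicator measurableSet_Ioi]
        congr 1 with t
        by_cases ht : t ∈ Ioi 0
        · simp only [lipschitzKernel, indicator_of_mem ht, smul_eq_mul]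
          rw [mul_left_comm, ← Complex.exp_add]
          push_cast
          ring_nf
        · simp [lipschitzKernel, indicator_of_notMem ht]
    _ = Gamma s * (2 * π * I * -(τ - x)) ^ (-s) := by
        rw [integral_ofReal_cpow_mul_cexp_neg_mul_Ioi hs hc, neg_sub, mul_comm]
    _ = _ := by
        rw [two_pi_I_mul_neg_cpow (by simpa using hτ), cpow_neg,
          show -(π * I * -s / 2) = -(-π * I * s / 2) by ring, Complex.exp_neg]
        ring

lemma fourier_add_ofReal_cpow_neg (hs : 1 < s.re) (hτ : 0 < τ.im) :
    𝓕 (fun x : ℝ => (τ + x) ^ (-s)) =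
      (cexp (-π * I * s / 2) * (2 * π) ^ s / Gamma s) • lipschitzKernel s τ := by
  have hs₀ : 0 < s.re := by linarith
  set K := cexp (-π * I * s / 2) * (2 * π) ^ s / Gamma s
  have hK : K ≠ 0 := by simp [K, Gamma_ne_zero_of_re_pos hs₀, pi_ne_zero]
  have hFg_eq : ∀ x : ℝ, 𝓕 (lipschitzKernel s τ) x = K⁻¹ * (τ + ↑(-x)) ^ (-s) := fun x => by
    rw [fourier_lipschitzKernel hs₀ hτ, inv_div, ofReal_neg, sub_eq_add_neg]
  have hf : (fun x : ℝ => (τ + x) ^ (-s)) = K • fun x => 𝓕 (lipschitzKernel s τ) (-x) := by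
    ext x
    rw [Pi.smul_apply, hFg_eq, neg_neg, smul_eq_mul, mul_inv_cancel_left₀ hK]
  have hFg : Integrable (𝓕 (lipschitzKernel s τ)) := by
    rw [funext hFg_eq]
    exact (integrable_add_ofReal_cpow_neg hτ.ne' hs).comp_neg.const_mul _
  rw [hf, fourier_const_smul, ← Real.fourierInv_eq_fourier_comp_neg,
    (continuous_lipschitzKernel hs).fourierInv_fourier_eq (integrable_lipschitzKernel hs₀ hτ) hFg]

lemma summable_lipschitzKernel_int (hτ : 0 < τ.im) (s : ℂ) :
    Summable fun n : ℤ => lipschitzKernel s τ n := by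
  refine .of_nat_of_neg (.of_norm_bounded
    (Real.summable_pow_mul_exp_neg_nat_mul ⌈s.re - 1⌉₊ (by positivity : 0 < 2 * π * τ.im))
    fun n => ?_) (summable_zero.congr fun n => ?_)
  · rcases n.eq_zero_or_pos with rfl | hn
    · simp [lipschitzKernel]
    have hn' : (0 : ℝ) < n := by exact_mod_cast hn
    simp only [Int.cast_natCast, lipschitzKernel, indicator_of_mem (mem_Ioi.mpr hn'), norm_mul,
      norm_cpow_eq_rpow_re_of_pos hn', norm_exp]
    gcongr
    · rw [← Real.rpow_natCast]
      exact Real.rpow_le_rpow_of_exponent_le (by exact_mod_cast hn) (Nat.le_ceil _)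
    · exact le_of_eq (by simp; ring)
  · simp [lipschitzKernel]

lemma tsum_lipschitzKernel_int (s : ℂ) (τ : ℂ) :
    ∑' n : ℤ, lipschitzKernel s τ n =
      ∑' n : ℕ+, (n : ℂ) ^ (s - 1) * cexp (2 * π * I * n * τ) := by
  have hsupp : Function.support (fun n : ℤ => lipschitzKernel s τ n) ⊆
      range fun n : ℕ+ => ((n : ℕ) : ℤ) := by
    intro n hn
    have hpos : 0 < n := by
      by_contra! h
      exact hn (indicator_of_notMem (by simpa using h) _)
    exact ⟨⟨n.toNat, by omega⟩, by simp [hpos.le]⟩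
  rw [← Function.Injective.tsum_eq (g := fun n : ℕ+ => ((n : ℕ) : ℤ))
    (fun a b h => by simpa using h) hsupp]
  congr with n
  simp [lipschitzKernel]

end ShiftedPower

/-- Lipschitz's formula: for `Re s > 1` and `τ` in the upper half-plane,
`∑_{n ∈ ℤ} (τ+n)^{-s} = e^{-πis/2}(2π)^s/Γ(s) · ∑_{n ≥ 1} n^{s-1} e^{2πinτ}`. -/
theorem lipschitz_formula (s : ℂ) (hs : 1 < s.re) (τ : ℂ) (hτ : 0 < τ.im) :
    ∑' n : ℤ, (τ + (n : ℂ)) ^ (-s) =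
      Complex.exp (-(Real.pi : ℂ) * Complex.I * s / 2) * (2 * (Real.pi : ℂ)) ^ s /
        Complex.Gamma s *
        ∑' n : ℕ+, (n : ℂ) ^ (s - 1) * Complex.exp (2 * (Real.pi : ℂ) * Complex.I * n * τ) := by
  have hF := fourier_add_ofReal_cpow_neg hs hτ
  have hsum : Summable fun n : ℤ => 𝓕 (fun x : ℝ => (τ + x) ^ (-s)) n := by
    simpa only [hF, Pi.smul_apply] using (summable_lipschitzKernel_int hτ s).const_smul _
  have hpoisson := Real.tsum_eq_tsum_fourier_of_rpow_decay_of_summable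
    (continuous_add_ofReal_cpow hτ.ne' _) hs (isBigO_add_ofReal_cpow_neg hτ.ne' (by linarith))
    hsum 0
  simpa only [zero_add, AddCircle.coe_zero, fourier_eval_zero, mul_one, hF, Pi.smul_apply,
    smul_eq_mul, tsum_mul_left, ofReal_intCast, tsum_lipschitzKernel_int] using hpoisson
end

section
/- For every negative odd integer m, the limit lim_{s→m} Γ(s)ζ(s,1/2)cos(πs/2) exists and equals (-1)^{(m+1)/2} · (2^m - 1)π B_{1-m} / (2·(1-m)!), where B_n denotes the n-th Bernoulli number. -/
/-!
By the reflection formula, `Γ(s) cos(πs/2) = π / (2 sin(πs/2) Γ(1-s))` away from the integers,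
and the right-hand side is continuous wherever `sin(πs/2) ≠ 0`, in particular at odd `m`. So the
limit is `π ζ(m, 1/2) / (2 sin(πm/2) (-m)!)`. Finally `ζ(-k, 1/2) = -B_{k+1}(1/2) / (k+1)` and
`B_n(1/2) = (2^{1-n} - 1) B_n`, which is read off from generating functions: with
`B(X) = X / (e^X - 1)`, the exponential generating function of `B_n(1/2)` is `2 B(X/2) - B(X)`.
-/

open Complex HurwitzZeta Filter Topology
open scoped Real

open PowerSeries in
theorem Polynomial.bernoulli_eval_one_half (n : ℕ) :
    (bernoulli n).eval (1 / 2 : ℚ) = (2 * (1 / 2) ^ n - 1) * _root_.bernoulli n := by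
  have hB := bernoulliPowerSeries_mul_exp_sub_one ℚ
  have hBhalf : rescale (1 / 2 : ℚ) (bernoulliPowerSeries ℚ) *
      (rescale (1 / 2 : ℚ) (exp ℚ) - 1) = PowerSeries.C (1 / 2 : ℚ) * PowerSeries.X := by
    simpa [rescale_X] using congrArg (rescale (1 / 2 : ℚ)) hB
  have hexp_half : rescale (1 / 2 : ℚ) (exp ℚ) * rescale (1 / 2 : ℚ) (exp ℚ) = exp ℚ := by
    rw [exp_mul_exp_eq_exp_add]; norm_num [rescale_one]
  have hC : (2 : ℚ⟦X⟧) * PowerSeries.C (1 / 2 : ℚ) = 1 := by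
    rw [← map_ofNat PowerSeries.C 2, ← map_mul]; norm_num
  have hexp : exp ℚ - 1 ≠ 0 := fun h => by
    simpa [coeff_exp] using congrArg (PowerSeries.coeff 1) h
  have hgen : mk (fun n => aeval (1 / 2 : ℚ) ((1 / n.factorial : ℚ) • bernoulli n))
      = 2 * rescale (1 / 2 : ℚ) (bernoulliPowerSeries ℚ) - bernoulliPowerSeries ℚ := by
    refine mul_right_cancel₀ hexp ?_
    rw [bernoulli_generating_function]
    linear_combination hB - 2 * (rescale (1 / 2 : ℚ) (exp ℚ) + 1) * hBhalf
      + 2 * rescale (1 / 2 : ℚ) (bernoulliPowerSeries ℚ) * hexp_half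
      - PowerSeries.X * (rescale (1 / 2 : ℚ) (exp ℚ) + 1) * hC
  have hcoeff := congrArg (PowerSeries.coeff n) hgen
  simp only [coeff_mk, map_sub, two_mul, map_add, coeff_rescale, bernoulliPowerSeries,
    Polynomial.aeval_def, Polynomial.eval₂_id, Algebra.algebraMap_self, RingHom.id_apply,
    Polynomial.eval_smul, smul_eq_mul] at hcoeff
  have hfac : (n.factorial : ℚ) ≠ 0 := by positivity
  field_simp at hcoeff
  linear_combination hcoeff

lemma Complex.eventually_sin_pi_mul_ne_zero (z : ℂ) : ∀ᶠ s in 𝓝[≠] z, sin (π * s) ≠ 0 := by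
  have hf : AnalyticOnNhd ℂ (fun s : ℂ => sin (π * s)) Set.univ :=
    (differentiable_sin.comp (differentiable_id.const_mul _)).differentiableOn.analyticOnNhd
      isOpen_univ
  refine (hf z trivial).eventually_eq_zero_or_eventually_ne_zero.resolve_left fun h => ?_
  have := hf.eqOn_zero_of_preconnected_of_eventuallyEq_zero isPreconnected_univ
    (Set.mem_univ z) h (Set.mem_univ (1 / 2))
  simp [← div_eq_mul_inv] at this

lemma Complex.Gamma_mul_cos_pi_mul_div_two {s : ℂ} (hs : sin (π * s) ≠ 0) :
    Gamma s * cos (π * s / 2) = π / (2 * sin (π * s / 2)) * (Gamma (1 - s))⁻¹ := by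
  have hrefl := Gamma_mul_Gamma_one_sub s
  have hΓ : Gamma (1 - s) ≠ 0 := by
    intro h; rw [h, mul_zero, eq_comm, div_eq_zero_iff] at hrefl; simp_all [Real.pi_ne_zero]
  rw [show π * s = 2 * (π * s / 2) by ring, sin_two_mul] at hs hrefl
  have hsin2 : sin (π * s / 2) ≠ 0 := right_ne_zero_of_mul (left_ne_zero_of_mul hs)
  field_simp
  rw [eq_div_iff hs] at hrefl
  linear_combination hrefl

lemma Complex.tendsto_Gamma_mul_cos_pi_mul_div_two_nhdsNE {z : ℂ} (hz : sin (π * z / 2) ≠ 0) :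
    Tendsto (fun s => Gamma s * cos (π * s / 2)) (𝓝[≠] z)
      (𝓝 (π / (2 * sin (π * z / 2)) * (Gamma (1 - z))⁻¹)) := by
  have hcont : ContinuousAt (fun s => π / (2 * sin (π * s / 2)) * (Gamma (1 - s))⁻¹) z := by
    refine ContinuousAt.mul ?_ ?_
    · exact continuousAt_const.div (by fun_prop) (mul_ne_zero two_ne_zero hz)
    · exact (differentiable_one_div_Gamma.comp (differentiable_const 1 |>.sub differentiable_id))
        |>.continuous.continuousAt
  refine (hcont.tendsto.mono_left nhdsWithin_le_nhds).congr' ?_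
  filter_upwards [eventually_sin_pi_mul_ne_zero z] with s hs
  exact (Gamma_mul_cos_pi_mul_div_two hs).symm

lemma Complex.sin_pi_mul_two_mul_int_add_one_div_two (l : ℤ) :
    sin (π * (2 * l + 1) / 2) = (-1) ^ l := by
  rw [show (π : ℂ) * (2 * l + 1) / 2 = (l * π : ℝ) + π / 2 by push_cast; ring, sin_add_pi_div_two,
    ← ofReal_cos, Real.cos_int_mul_pi]
  push_cast
  rfl

lemma HurwitzZeta.hurwitzZeta_one_half_neg_nat {k : ℕ} (hk : k ≠ 0) :
    hurwitzZeta (1 / 2 : ℝ) (-k) = -((2 : ℂ) ^ (-(k : ℤ)) - 1) * bernoulli (k + 1) / (k + 1) := by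
  rw [hurwitzZeta_neg_nat hk (by norm_num), Polynomial.eval_map,
    show ((1 / 2 : ℝ) : ℂ) = algebraMap ℚ ℂ (1 / 2) by simp, Polynomial.eval₂_at_apply,
    Polynomial.bernoulli_eval_one_half, eq_ratCast (algebraMap ℚ ℂ), zpow_neg, zpow_natCast]
  push_cast
  rw [div_pow, one_pow]
  field_simp
  ring

/-- For a negative odd integer `m`, `lim_{s→m} Γ(s) ζ(s,1/2) cos(πs/2)` exists and equals
`(-1)^{(m+1)/2} (2^m - 1) π B_{1-m} / (2 (1-m)!)`. -/
theorem limit_Gamma_hurwitzZeta_cos_neg_odd (m : ℤ) (hm : m < 0) (hodd : Odd m) :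
    Tendsto
      (fun s : ℂ => Complex.Gamma s * hurwitzZeta ((1 / 2 : ℝ) : UnitAddCircle) s *
        Complex.cos ((Real.pi : ℂ) * s / 2))
      (𝓝[≠] (m : ℂ))
      (𝓝 ((-1 : ℂ) ^ ((m + 1) / 2) * ((2 : ℂ) ^ m - 1) * (Real.pi : ℂ) *
        ((bernoulli (1 - m).toNat : ℚ) : ℂ) / (2 * (Nat.factorial (1 - m).toNat : ℂ)))) := by
  obtain ⟨l, rfl⟩ := hodd
  obtain ⟨k, hk, hlk⟩ : ∃ k : ℕ, k ≠ 0 ∧ 2 * l + 1 = -k :=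
    ⟨(-(2 * l + 1)).toNat, by omega, by omega⟩
  have hsin : sin (π * ((2 * l + 1 : ℤ) : ℂ) / 2) = (-1) ^ l := by
    exact_mod_cast sin_pi_mul_two_mul_int_add_one_div_two l
  have hΓcos := tendsto_Gamma_mul_cos_pi_mul_div_two_nhdsNE (z := ((2 * l + 1 : ℤ) : ℂ))
    (by rw [hsin]; exact zpow_ne_zero _ (by norm_num))
  have hζ : ContinuousAt (hurwitzZeta (1 / 2 : ℝ)) ((2 * l + 1 : ℤ) : ℂ) :=
    (differentiableAt_hurwitzZeta _ (by exact_mod_cast (by omega : 2 * l + 1 ≠ 1))).continuousAt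
  convert hΓcos.mul (hζ.tendsto.mono_left nhdsWithin_le_nhds) using 1
  · ext s; ring
  rw [hsin, show (2 * l + 1 + 1) / 2 = l + 1 by omega,
    show (1 - (2 * l + 1)).toNat = k + 1 by omega, hlk, Int.cast_neg, Int.cast_natCast,
    sub_neg_eq_add, add_comm 1, Gamma_nat_eq_factorial,
    hurwitzZeta_one_half_neg_nat hk, Nat.factorial_succ]
  have hsign : (-1 : ℂ) ^ l * (-1) ^ l = 1 := by rw [← mul_zpow]; norm_num
  have hk1 : (k : ℂ) + 1 ≠ 0 := by norm_cast
  congr 1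
  push_cast
  rw [zpow_add_one₀ (by norm_num)]
  field_simp
  linear_combination -((2 : ℂ) ^ (-(k : ℤ)) - 1) * bernoulli (k + 1) * (k.factorial : ℂ)⁻¹ * hsign
end
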